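/- arXiv:1503.02255 — 2 statements merged into one kernel-verified Lean document; each statement's English description precedes it below -/
import Mathlib

section
/- Let (M_i)_{i≥1} be nonnegative random variables on a probability space, let θ > 0, c₁ > 0, and (δ_i)_{i≥1} positive reals with ∑_i δ_i² log(e+δ_i^{-1}) = θ. Suppose for every i and every r > 0 with r²/θ ≥ 5, P(M_i ≥ δ_i √(r² log(e+δ_i^{-1})/θ)) ≤ c₁ exp(−r² log(e+δ_i^{-1})/(2θ)). Set λ̃ := inf_i log(e+δ_i^{-1})/(2θ). Then for every λ ∈ (0, λ̃) there is a constant c > 0 such that P(√(∑_i M_i²) ≥ r) ≤ c e^{-λ r²} for all r ≥ 0. -/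
/-!
Put `L i = log (e + δ i⁻¹)` and `λ̃ = inf_i L i / (2θ)`. Since `∑ δ i ^ 2 * L i = θ`, the thresholds
`a i = δ i * √(r ^ 2 * L i / θ)` satisfy `∑ a i ^ 2 = r ^ 2`, so `√(∑ M i ^ 2) ≥ r` forces
`M i ≥ a i` for some `i`, and a union bound applies. Once `r ^ 2 ≥ 5θλ̃ / (λ̃ - λ)`, the exponent
`r ^ 2 * L i / (2θ)` exceeds `λ r ^ 2 + 2 L i`, so the `i`-th term is at most
`c₁ δ i ^ 2 e^{-λ r²}`, which sums to `c₁ (∑ δ i ^ 2) e^{-λ r²}`. For smaller `r` the trivial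
bound `1` is absorbed into the constant.
-/

open MeasureTheory

lemma one_le_log_exp_one_add {x : ℝ} (hx : 0 ≤ x) : 1 ≤ Real.log (Real.exp 1 + x) := by
  calc (1 : ℝ) = Real.log (Real.exp 1) := (Real.log_exp 1).symm
    _ ≤ Real.log (Real.exp 1 + x) :=
      Real.log_le_log (Real.exp_pos 1) (le_add_of_nonneg_right hx)

lemma exp_neg_two_mul_log_exp_one_add_inv_le {d : ℝ} (hd : 0 < d) :
    Real.exp (-(2 * Real.log (Real.exp 1 + d⁻¹))) ≤ d ^ 2 := by
  have hpos : 0 < Real.exp 1 + d⁻¹ := by positivity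
  have hd_mul : 1 ≤ d * (Real.exp 1 + d⁻¹) := by
    rw [mul_add, mul_inv_cancel₀ hd.ne']
    nlinarith [Real.exp_pos 1]
  rw [Real.exp_neg, mul_comm, Real.exp_mul, Real.exp_log hpos, inv_le_iff_one_le_mul₀ (by positivity)]
  calc (1 : ℝ) ≤ (d * (Real.exp 1 + d⁻¹)) ^ 2 := one_le_pow₀ hd_mul
    _ = d ^ 2 * (Real.exp 1 + d⁻¹) ^ (2 : ℝ) := by rw [Real.rpow_two]; ring

lemma five_mul_le_sq_mul_sub {θ lam t u r : ℝ} (hlam : 0 < lam) (hlt : lam < t) (htu : t ≤ u)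
    (hr : 5 * θ * t / (t - lam) ≤ r ^ 2) :
    5 * θ * u ≤ r ^ 2 * (u - lam) := by
  have ht : 0 < t := hlam.trans hlt
  rw [div_le_iff₀ (sub_pos.2 hlt)] at hr
  have hmono : u * (t - lam) ≤ t * (u - lam) := by nlinarith
  have : t * (5 * θ * u) ≤ t * (r ^ 2 * (u - lam)) := by
    nlinarith [mul_le_mul_of_nonneg_left hmono (sq_nonneg r), mul_le_mul_of_nonneg_right hr (ht.le.trans htu)]
  exact le_of_mul_le_mul_left this ht

lemma exp_neg_sq_mul_log_div_le {θ lam t r d : ℝ} (hθ : 0 < θ) (hd : 0 < d) (hlam : 0 < lam)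
    (hlt : lam < t) (ht : t ≤ Real.log (Real.exp 1 + d⁻¹) / (2 * θ))
    (hr : 5 * θ * t / (t - lam) ≤ r ^ 2) :
    Real.exp (-(r ^ 2 * Real.log (Real.exp 1 + d⁻¹)) / (2 * θ)) ≤ d ^ 2 * Real.exp (-lam * r ^ 2) := by
  set L := Real.log (Real.exp 1 + d⁻¹)
  have hL : 0 ≤ L := zero_le_one.trans (one_le_log_exp_one_add (inv_pos.2 hd).le)
  have hkey := five_mul_le_sq_mul_sub hlam hlt ht hr
  have hexponent : -(r ^ 2 * L) / (2 * θ) ≤ -(2 * L) + -lam * r ^ 2 := by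
    have h5 : 5 * θ * (L / (2 * θ)) = 5 / 2 * L := by field_simp
    have hsplit : -(r ^ 2 * L) / (2 * θ) = -lam * r ^ 2 - r ^ 2 * (L / (2 * θ) - lam) := by
      field_simp; ring
    linarith
  calc Real.exp (-(r ^ 2 * L) / (2 * θ)) ≤ Real.exp (-(2 * L)) * Real.exp (-lam * r ^ 2) := by
        rw [← Real.exp_add]; exact Real.exp_le_exp.2 hexponent
    _ ≤ d ^ 2 * Real.exp (-lam * r ^ 2) :=
        mul_le_mul_of_nonneg_right (exp_neg_two_mul_log_exp_one_add_inv_le hd) (Real.exp_pos _).le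

lemma hasSum_sq_mul_sqrt {ι : Type*} {δ L : ι → ℝ} {θ r : ℝ} (hL : ∀ i, 0 ≤ L i) (hθ : 0 < θ)
    (hδL : HasSum (fun i => δ i ^ 2 * L i) θ) :
    HasSum (fun i => (δ i * Real.sqrt (r ^ 2 * L i / θ)) ^ 2) (r ^ 2) := by
  have hterm : ∀ i, (δ i * Real.sqrt (r ^ 2 * L i / θ)) ^ 2 = r ^ 2 / θ * (δ i ^ 2 * L i) := by
    intro i
    rw [mul_pow, Real.sq_sqrt (by have := hL i; positivity)]
    ring
  have := hδL.mul_left (r ^ 2 / θ)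
  rwa [div_mul_cancel₀ _ hθ.ne', ← funext hterm] at this

lemma exists_le_of_tsum_sq_le_tsum_sq {ι : Type*} [Nonempty ι] {x a : ι → ℝ} (hx : ∀ i, 0 ≤ x i)
    (ha : Summable fun i => a i ^ 2) (hax : ∑' i, a i ^ 2 ≤ ∑' i, x i ^ 2) : ∃ i, a i ≤ x i := by
  by_contra! hlt
  have hsq : ∀ i, x i ^ 2 < a i ^ 2 := fun i => pow_lt_pow_left₀ (hlt i) (hx i) two_ne_zero
  have hx_sum : Summable fun i => x i ^ 2 :=
    ha.of_nonneg_of_le (fun i => sq_nonneg _) fun i => (hsq i).le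
  exact hax.not_gt <| hx_sum.tsum_lt_tsum (fun i => (hsq i).le) (hsq (Classical.arbitrary ι)) ha

lemma measure_le_sqrt_tsum_sq_le {Ω ι : Type*} [MeasurableSpace Ω] [Countable ι] [Nonempty ι]
    (P : Measure Ω) {M : ι → Ω → ℝ} (hM : ∀ i ω, 0 ≤ M i ω) {a : ι → ℝ} {r : ℝ} (hr : 0 ≤ r)
    (ha : Summable fun i => a i ^ 2) (har : ∑' i, a i ^ 2 ≤ r ^ 2) :
    P {ω | r ≤ Real.sqrt (∑' i, M i ω ^ 2)} ≤ ∑' i, P {ω | a i ≤ M i ω} := by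
  refine (measure_mono fun ω hω => ?_).trans (measure_iUnion_le _)
  have hrM : r ^ 2 ≤ ∑' i, M i ω ^ 2 :=
    (Real.le_sqrt hr (tsum_nonneg fun i => sq_nonneg _)).1 hω
  exact Set.mem_iUnion.2 (exists_le_of_tsum_sq_le_tsum_sq (hM · ω) ha (har.trans hrM))

lemma exists_pos_gaussian_bound {p : ℝ → ENNReal} {A R lam : ℝ} (hA : 0 ≤ A) (hR : 0 ≤ R)
    (hlam : 0 ≤ lam) (hp : ∀ r, p r ≤ 1)
    (hlarge : ∀ r, 0 ≤ r → R < r ^ 2 → p r ≤ ENNReal.ofReal (A * Real.exp (-lam * r ^ 2))) :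
    ∃ c : ℝ, 0 < c ∧ ∀ r : ℝ, 0 ≤ r → p r ≤ ENNReal.ofReal (c * Real.exp (-lam * r ^ 2)) := by
  have hexpR : 1 ≤ Real.exp (lam * R) := Real.one_le_exp (mul_nonneg hlam hR)
  refine ⟨(A + 1) * Real.exp (lam * R), by positivity, fun r hr => ?_⟩
  rcases le_or_gt (r ^ 2) R with hsmall | hbig
  · refine (hp r).trans (ENNReal.one_le_ofReal.2 ?_)
    calc (1 : ℝ) ≤ Real.exp (lam * R + -lam * r ^ 2) := Real.one_le_exp (by nlinarith)
      _ = 1 * Real.exp (lam * R) * Real.exp (-lam * r ^ 2) := by rw [Real.exp_add]; ring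
      _ ≤ (A + 1) * Real.exp (lam * R) * Real.exp (-lam * r ^ 2) := by gcongr; linarith
  · refine (hlarge r hr hbig).trans (ENNReal.ofReal_le_ofReal ?_)
    gcongr
    nlinarith

theorem stmt13_general {Ω : Type*} [MeasurableSpace Ω] (P : Measure Ω) [IsProbabilityMeasure P]
    (M : ℕ → Ω → ℝ) (hM0 : ∀ i ω, 0 ≤ M i ω)
    (θ c₁ : ℝ) (hθ : 0 < θ) (hc₁ : 0 < c₁)
    (δ : ℕ → ℝ) (hδ : ∀ i, 0 < δ i)
    (hθeq : (∑' i, δ i ^ 2 * Real.log (Real.exp 1 + (δ i)⁻¹)) = θ)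
    (htail : ∀ i, ∀ r : ℝ, 0 < r → 5 ≤ r ^ 2 / θ →
      P {ω | δ i * Real.sqrt (r ^ 2 * Real.log (Real.exp 1 + (δ i)⁻¹) / θ) ≤ M i ω} ≤
        ENNReal.ofReal (c₁ * Real.exp (-(r ^ 2 * Real.log (Real.exp 1 + (δ i)⁻¹)) / (2 * θ)))) :
    ∀ lam : ℝ, 0 < lam → lam < ⨅ i, Real.log (Real.exp 1 + (δ i)⁻¹) / (2 * θ) →
      ∃ c : ℝ, 0 < c ∧ ∀ r : ℝ, 0 ≤ r →
        P {ω | r ≤ Real.sqrt (∑' i, (M i ω) ^ 2)} ≤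
          ENNReal.ofReal (c * Real.exp (-lam * r ^ 2)) := by
  intro lam hlam hlamt
  set L : ℕ → ℝ := fun i => Real.log (Real.exp 1 + (δ i)⁻¹)
  have hL1 : ∀ i, 1 ≤ L i := fun i => one_le_log_exp_one_add (inv_pos.2 (hδ i)).le
  have hsumL : Summable fun i => δ i ^ 2 * L i := by
    by_contra h
    exact hθ.ne' (hθeq ▸ tsum_eq_zero_of_not_summable h)
  have hsumδ : Summable fun i => δ i ^ 2 :=
    hsumL.of_nonneg_of_le (fun i => sq_nonneg _) fun i => le_mul_of_one_le_right (sq_nonneg _) (hL1 i)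
  set t := ⨅ i, L i / (2 * θ)
  have ht : ∀ i, t ≤ L i / (2 * θ) :=
    ciInf_le ⟨0, by rintro _ ⟨i, rfl⟩; exact div_nonneg (zero_le_one.trans (hL1 i)) (by positivity)⟩
  have hR5 : 5 * θ ≤ 5 * θ * t / (t - lam) := by
    rw [le_div_iff₀ (sub_pos.2 hlamt)]; nlinarith
  refine exists_pos_gaussian_bound (A := c₁ * ∑' i, δ i ^ 2) (R := 5 * θ * t / (t - lam))
    (mul_nonneg hc₁.le (tsum_nonneg fun i => sq_nonneg (δ i)))
    (by linarith) hlam.le (fun r => prob_le_one) fun r hr hrR => ?_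
  have hr0 : 0 < r := hr.lt_of_ne (by rintro rfl; linarith)
  have hr5 : 5 ≤ r ^ 2 / θ := (le_div_iff₀ hθ).2 (by linarith)
  have ha := hasSum_sq_mul_sqrt (r := r) (fun i => zero_le_one.trans (hL1 i)) hθ (hθeq ▸ hsumL.hasSum)
  calc P {ω | r ≤ Real.sqrt (∑' i, M i ω ^ 2)}
      ≤ ∑' i, P {ω | δ i * Real.sqrt (r ^ 2 * L i / θ) ≤ M i ω} :=
        measure_le_sqrt_tsum_sq_le P hM0 hr ha.summable ha.tsum_eq.le
    _ ≤ ∑' i, ENNReal.ofReal (c₁ * δ i ^ 2 * Real.exp (-lam * r ^ 2)) := by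
        refine ENNReal.tsum_le_tsum fun i => (htail i r hr0 hr5).trans (ENNReal.ofReal_le_ofReal ?_)
        rw [mul_assoc]
        exact mul_le_mul_of_nonneg_left
          (exp_neg_sq_mul_log_div_le hθ (hδ i) hlam hlamt (ht i) hrR.le) hc₁.le
    _ = ENNReal.ofReal (c₁ * (∑' i, δ i ^ 2) * Real.exp (-lam * r ^ 2)) := by
        rw [← ENNReal.ofReal_tsum_of_nonneg (fun i => by positivity)
          ((hsumδ.mul_left c₁).mul_right _), tsum_mul_right, tsum_mul_left]

theorem stmt13 {Ω : Type*} [MeasurableSpace Ω] (P : Measure Ω) [IsProbabilityMeasure P]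
    (M : ℕ → Ω → ℝ) (hMmeas : ∀ i, Measurable (M i)) (hM0 : ∀ i ω, 0 ≤ M i ω)
    (θ c₁ : ℝ) (hθ : 0 < θ) (hc₁ : 0 < c₁)
    (δ : ℕ → ℝ) (hδ : ∀ i, 0 < δ i)
    (hθeq : (∑' i, δ i ^ 2 * Real.log (Real.exp 1 + (δ i)⁻¹)) = θ)
    (htail : ∀ i, ∀ r : ℝ, 0 < r → 5 ≤ r ^ 2 / θ →
      P {ω | δ i * Real.sqrt (r ^ 2 * Real.log (Real.exp 1 + (δ i)⁻¹) / θ) ≤ M i ω} ≤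
        ENNReal.ofReal (c₁ * Real.exp (-(r ^ 2 * Real.log (Real.exp 1 + (δ i)⁻¹)) / (2 * θ)))) :
    ∀ lam : ℝ, 0 < lam → lam < ⨅ i, Real.log (Real.exp 1 + (δ i)⁻¹) / (2 * θ) →
      ∃ c : ℝ, 0 < c ∧ ∀ r : ℝ, 0 ≤ r →
        P {ω | r ≤ Real.sqrt (∑' i, (M i ω) ^ 2)} ≤
          ENNReal.ofReal (c * Real.exp (-lam * r ^ 2)) :=
  stmt13_general P M hM0 θ c₁ hθ hc₁ δ hδ hθeq htail
end

section
/- Let (λ_j)_{j≥1} be positive reals, (a_j)_{j≥1} nonnegative reals, and δ ∈ (0,1) such that ∑_{j=1}^∞ a_j / λ_j^{1-δ} < ∞. Then for every ε ∈ (0, δ/(1-δ)], ∫₀¹ ( ∑_{j=1}^∞ e^{-2 λ_j t} a_j )^{1+ε} dt < ∞. -/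
/-!
With the summable weights `w j = a j / lam j ^ (1 - dlt)`, the integrand is `(∑ w j * f j t) ^ q`
for `f j t = lam j ^ (1 - dlt) * exp (-2 lam j t)` and `q = 1 + ε`. Hölder's inequality for the
weights (Jensen for `x ↦ x ^ q`) bounds it by `(∑ w) ^ (q - 1) * ∑ w j * f j t ^ q`, and
`∫₀¹ f j t ^ q dt ≤ 1` for every `j`, because the exponent `(1 - dlt) q` of `lam j` is at most `1`
exactly when `ε ≤ dlt / (1 - dlt)`: for `lam ≤ 1` bound the power and the exponential by `1`, for
`lam > 1` use `∫₀^∞ exp (-c lam t) dt = 1 / (c lam)`.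
-/

open MeasureTheory
open scoped ENNReal

namespace ENNReal

theorem tsum_mul_rpow_le {ι : Type*} (w f : ι → ℝ≥0∞) {q : ℝ} (hq : 1 ≤ q) :
    (∑' i, w i * f i) ^ q ≤ (∑' i, w i) ^ (q - 1) * ∑' i, w i * f i ^ q := by
  let : MeasurableSpace ι := ⊤
  have hq0 : 0 < q := by linarith
  have hθ : 0 ≤ 1 - 1 / q := by rw [sub_nonneg, div_le_one hq0]; exact hq
  have hsplit : ∀ i, w i * f i = w i ^ (1 - 1 / q) * (w i * f i ^ q) ^ (1 / q) := fun i => by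
    rw [mul_rpow_of_nonneg _ _ (by positivity), ← rpow_mul, mul_one_div_cancel hq0.ne',
      rpow_one, ← mul_assoc, ← rpow_add_of_nonneg _ _ hθ (by positivity), sub_add_cancel,
      rpow_one]
  have holder := lintegral_mul_norm_pow_le (μ := Measure.count) (f := w)
    (g := fun i => w i * f i ^ q) measurable_from_top.aemeasurable
    measurable_from_top.aemeasurable hθ (by positivity) (sub_add_cancel 1 (1 / q))
  simp only [lintegral_count, ← hsplit] at holder
  calc (∑' i, w i * f i) ^ q
      ≤ ((∑' i, w i) ^ (1 - 1 / q) * (∑' i, w i * f i ^ q) ^ (1 / q)) ^ q :=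
        rpow_le_rpow holder hq0.le
    _ = (∑' i, w i) ^ (q - 1) * ∑' i, w i * f i ^ q := by
        rw [mul_rpow_of_nonneg _ _ hq0.le, ← rpow_mul, ← rpow_mul, one_div_mul_cancel hq0.ne',
          rpow_one, sub_mul, one_div_mul_cancel hq0.ne', one_mul]

end ENNReal

theorem lintegral_tsum_mul_rpow_le {α ι : Type*} [MeasurableSpace α] [Countable ι]
    (μ : Measure α) (w : ι → ℝ≥0∞) {f : ι → α → ℝ≥0∞} (hf : ∀ i, AEMeasurable (f i) μ)
    {q : ℝ} (hq : 1 ≤ q) :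
    ∫⁻ x, (∑' i, w i * f i x) ^ q ∂μ ≤
      (∑' i, w i) ^ (q - 1) * ∑' i, w i * ∫⁻ x, f i x ^ q ∂μ := by
  have hfq : ∀ i, AEMeasurable (fun x => w i * f i x ^ q) μ :=
    fun i => ((hf i).pow_const q).const_mul _
  calc ∫⁻ x, (∑' i, w i * f i x) ^ q ∂μ
      ≤ ∫⁻ x, (∑' i, w i) ^ (q - 1) * ∑' i, w i * f i x ^ q ∂μ :=
        lintegral_mono fun x => ENNReal.tsum_mul_rpow_le w (f · x) hq
    _ = (∑' i, w i) ^ (q - 1) * ∑' i, w i * ∫⁻ x, f i x ^ q ∂μ := by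
        rw [lintegral_const_mul'' _ (AEMeasurable.tsum hfq), lintegral_tsum hfq]
        simp_rw [lintegral_const_mul'' _ ((hf _).pow_const q)]

theorem setLIntegral_Ioc_exp_neg_mul_le_one {B : ℝ} (hB : 0 ≤ B) :
    ∫⁻ t in Set.Ioc (0:ℝ) 1, ENNReal.ofReal (Real.exp (-(B * t))) ≤ 1 := by
  calc ∫⁻ t in Set.Ioc (0:ℝ) 1, ENNReal.ofReal (Real.exp (-(B * t)))
      ≤ ∫⁻ _ in Set.Ioc (0:ℝ) 1, 1 := by
        refine setLIntegral_mono' measurableSet_Ioc fun t ht => ?_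
        rw [ENNReal.ofReal_le_one, Real.exp_le_one_iff, neg_nonpos]
        exact mul_nonneg hB ht.1.le
    _ = 1 := by simp

theorem setLIntegral_Ioc_exp_neg_mul_le_inv {B : ℝ} (hB : 0 < B) :
    ∫⁻ t in Set.Ioc (0:ℝ) 1, ENNReal.ofReal (Real.exp (-(B * t))) ≤ ENNReal.ofReal B⁻¹ := by
  have hint : IntegrableOn (fun t : ℝ => Real.exp (-(B * t))) (Set.Ioi 0) := by
    simpa only [neg_mul] using exp_neg_integrableOn_Ioi 0 hB
  have hval : ∫ t in Set.Ioi (0:ℝ), Real.exp (-(B * t)) = B⁻¹ := by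
    have h := integral_comp_mul_left_Ioi (fun y => Real.exp (-y)) 0 hB
    rw [mul_zero] at h
    rw [h, integral_exp_neg_Ioi_zero, smul_eq_mul, mul_one]
  calc ∫⁻ t in Set.Ioc (0:ℝ) 1, ENNReal.ofReal (Real.exp (-(B * t)))
      ≤ ∫⁻ t in Set.Ioi (0:ℝ), ENNReal.ofReal (Real.exp (-(B * t))) :=
        lintegral_mono_set Set.Ioc_subset_Ioi_self
    _ = ENNReal.ofReal B⁻¹ := by
        rw [← ofReal_integral_eq_lintegral_ofReal hint
          (Filter.Eventually.of_forall fun t => (Real.exp_pos _).le), hval]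

theorem setLIntegral_Ioc_rpow_mul_exp_neg_mul_le_one {lam r c : ℝ} (hlam : 0 < lam)
    (hr0 : 0 ≤ r) (hr1 : r ≤ 1) (hc : 1 ≤ c) :
    ∫⁻ t in Set.Ioc (0:ℝ) 1, ENNReal.ofReal (lam ^ r * Real.exp (-(c * lam * t))) ≤ 1 := by
  have hlr : 0 ≤ lam ^ r := Real.rpow_nonneg hlam.le r
  simp_rw [ENNReal.ofReal_mul hlr]
  rw [lintegral_const_mul' _ _ ENNReal.ofReal_ne_top]
  rcases le_or_gt lam 1 with hl | hl
  · calc _ ≤ 1 * 1 := mul_le_mul' (ENNReal.ofReal_le_one.2 (Real.rpow_le_one hlam.le hl hr0))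
          (setLIntegral_Ioc_exp_neg_mul_le_one (by positivity))
      _ = 1 := one_mul 1
  · have hcl : 0 < c * lam := by positivity
    calc _ ≤ ENNReal.ofReal lam * ENNReal.ofReal (c * lam)⁻¹ := mul_le_mul'
          (ENNReal.ofReal_le_ofReal (Real.rpow_le_self_of_one_le hl.le hr1))
          (setLIntegral_Ioc_exp_neg_mul_le_inv hcl)
      _ ≤ 1 := by
        rw [← ENNReal.ofReal_mul hlam.le, ENNReal.ofReal_le_one, mul_inv, mul_left_comm,
          mul_inv_cancel₀ hlam.ne', mul_one]
        exact inv_le_one_of_one_le₀ hc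

theorem stmt15_general (lam : ℕ → ℝ) (hlam : ∀ j, 0 < lam j)
    (a : ℕ → ℝ) (ha : ∀ j, 0 ≤ a j) (dlt : ℝ) (hdlt1 : dlt < 1)
    (hsum : Summable (fun j => a j / lam j ^ (1 - dlt)))
    (ε : ℝ) (hε0 : 0 < ε) (hε1 : ε ≤ dlt / (1 - dlt)) :
    (∫⁻ t in Set.Ioc (0:ℝ) 1,
        (∑' j, ENNReal.ofReal (Real.exp (-2 * lam j * t) * a j)) ^ (1 + ε)) < ⊤ := by
  set w : ℕ → ℝ≥0∞ := fun j => ENNReal.ofReal (a j / lam j ^ (1 - dlt))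
  set f : ℕ → ℝ → ℝ≥0∞ := fun j t =>
    ENNReal.ofReal (lam j ^ (1 - dlt) * Real.exp (-2 * lam j * t))
  have hw_nonneg : ∀ j, 0 ≤ a j / lam j ^ (1 - dlt) :=
    fun j => div_nonneg (ha j) (Real.rpow_nonneg (hlam j).le _)
  have hw : ∑' j, w j ≠ ⊤ := by
    rw [← ENNReal.ofReal_tsum_of_nonneg hw_nonneg hsum]
    exact ENNReal.ofReal_ne_top
  have hsplit : ∀ j t, ENNReal.ofReal (Real.exp (-2 * lam j * t) * a j) = w j * f j t :=
    fun j t => by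
      rw [← ENNReal.ofReal_mul (hw_nonneg j)]
      have := (Real.rpow_pos_of_pos (hlam j) (1 - dlt)).ne'
      congr 1
      field_simp
  have hexp : (1 - dlt) * (1 + ε) ≤ 1 := by
    rw [le_div_iff₀ (by linarith)] at hε1
    nlinarith
  have hterm : ∀ j, ∫⁻ t in Set.Ioc (0:ℝ) 1, f j t ^ (1 + ε) ≤ 1 := fun j => by
    refine le_of_eq_of_le (setLIntegral_congr_fun measurableSet_Ioc fun t _ => ?_)
      (setLIntegral_Ioc_rpow_mul_exp_neg_mul_le_one (hlam j) (by nlinarith) hexp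
        (c := 2 * (1 + ε)) (by linarith))
    have hlr := Real.rpow_nonneg (hlam j).le (1 - dlt)
    rw [ENNReal.ofReal_rpow_of_nonneg (mul_nonneg hlr (Real.exp_pos _).le) (by linarith),
      Real.mul_rpow hlr (Real.exp_pos _).le, ← Real.rpow_mul (hlam j).le,
      ← Real.exp_mul]
    ring_nf
  simp_rw [hsplit]
  calc _ ≤ (∑' j, w j) ^ (1 + ε - 1) * ∑' j, w j * ∫⁻ t in Set.Ioc (0:ℝ) 1, f j t ^ (1 + ε) :=
        lintegral_tsum_mul_rpow_le _ w (fun j => by fun_prop) (by linarith)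
    _ ≤ (∑' j, w j) ^ (1 + ε - 1) * ∑' j, w j := by
        gcongr with j
        exact mul_le_of_le_one_right' (hterm j)
    _ < ⊤ := ENNReal.mul_lt_top (ENNReal.rpow_lt_top_of_nonneg (by linarith) hw) hw.lt_top

theorem stmt15 (lam : ℕ → ℝ) (hlam : ∀ j, 0 < lam j)
    (a : ℕ → ℝ) (ha : ∀ j, 0 ≤ a j) (dlt : ℝ) (hdlt0 : 0 < dlt) (hdlt1 : dlt < 1)
    (hsum : Summable (fun j => a j / lam j ^ (1 - dlt)))
    (ε : ℝ) (hε0 : 0 < ε) (hε1 : ε ≤ dlt / (1 - dlt)) :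
    (∫⁻ t in Set.Ioc (0:ℝ) 1,
        (∑' j, ENNReal.ofReal (Real.exp (-2 * lam j * t) * a j)) ^ (1 + ε)) < ⊤ :=
  stmt15_general lam hlam a ha dlt hdlt1 hsum ε hε0 hε1
end
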